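/- Let κ > 0 and p, q, γ ∈ ℝ. Then 𝒫(∂)[(1−·)^γ](z) = 0 for all z in the open unit disk 𝔻 if and only if A(p,q,γ) = 0 and C(p,γ) = 0, which holds if and only if p = (2 + κ/2)γ − (κ/2)γ² and 2p − q = (1 + κ/2)γ (i.e. (p,q) lies on the parabola ℛ with parameter γ). -/

import Mathlib

/-- The one-variable Beliaev–Smirnov type operator `𝒫(∂)` with parameters `κ, p, q`:
`𝒫(∂)[G](z) = −(κ/2)(z G′(z) + z² G″(z)) − ((1+z)/(1−z)) z G′(z)
  + (−p/(1−z)² + q/(1−z) + p − q) G(z)`. -/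
noncomputable def Pd (κ p q : ℝ) (G : ℂ → ℂ) (z : ℂ) : ℂ :=
  -(κ / 2 : ℂ) * (z * deriv G z + z ^ 2 * deriv (deriv G) z)
    - ((1 + z) / (1 - z)) * (z * deriv G z)
    + (-(p : ℂ) / (1 - z) ^ 2 + (q : ℂ) / (1 - z) + (p : ℂ) - (q : ℂ)) * G z

/-!
Applied to `(1 - z)^γ`, the operator gives `A (1-z)^γ + B (1-z)^(γ-1) + C (1-z)^(γ-2)` with
`A + B + C = 0`, so that it factors as `-z (1-z)^(γ-2) (A (1-z) - C)`. On the punctured disk this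
vanishes iff `A (1-z) = C`, and comparing `z = 1/2` with `z = -1/2` forces `A = C = 0`.
The parabola equations are a linear change of coordinates of `A = C = 0`.
-/

open Complex

/-- The coefficient `A(p,q,α)` of `(1-z)^α` in `𝒫(∂)[(1-·)^α]`. -/
noncomputable def powerCoeffA (κ p q α : ℝ) : ℝ := p - q + α - κ / 2 * α ^ 2

/-- The coefficient `C(p,α)` of `(1-z)^(α-2)` in `𝒫(∂)[(1-·)^α]`. -/
noncomputable def powerCoeffC (κ p α : ℝ) : ℝ := -p + (2 + κ / 2) * α - κ / 2 * α ^ 2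

lemma one_sub_mem_slitPlane_of_norm_lt_one {z : ℂ} (hz : ‖z‖ < 1) : 1 - z ∈ slitPlane := by
  simpa [sub_eq_add_neg] using mem_slitPlane_of_norm_lt_one (z := -z) (by simpa using hz)

lemma hasDerivAt_one_sub_cpow (c : ℂ) {z : ℂ} (hz : 1 - z ∈ slitPlane) :
    HasDerivAt (fun w : ℂ => (1 - w) ^ c) (-(c * (1 - z) ^ (c - 1))) z := by
  simpa [mul_comm] using ((hasDerivAt_id z).const_sub 1).cpow_const (c := c) hz

lemma deriv_one_sub_cpow (c : ℂ) {z : ℂ} (hz : 1 - z ∈ slitPlane) :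
    deriv (fun w : ℂ => (1 - w) ^ c) z = -(c * (1 - z) ^ (c - 1)) :=
  (hasDerivAt_one_sub_cpow c hz).deriv

lemma deriv_deriv_one_sub_cpow (c : ℂ) {z : ℂ} (hz : 1 - z ∈ slitPlane) :
    deriv (deriv fun w : ℂ => (1 - w) ^ c) z = c * (c - 1) * (1 - z) ^ (c - 2) := by
  have hU : IsOpen {w : ℂ | 1 - w ∈ slitPlane} :=
    isOpen_slitPlane.preimage (continuous_const.sub continuous_id)
  have hderiv :
      deriv (fun w : ℂ => (1 - w) ^ c) =ᶠ[nhds z] fun w => -(c * (1 - w) ^ (c - 1)) := by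
    filter_upwards [hU.mem_nhds hz] with w hw using deriv_one_sub_cpow c hw
  have h := ((hasDerivAt_one_sub_cpow (c - 1) hz).const_mul c).neg
  rw [hderiv.deriv_eq, show (fun w => -(c * (1 - w) ^ (c - 1))) = -fun w => c * (1 - w) ^ (c - 1)
    from rfl, h.deriv]
  ring_nf

lemma Pd_one_sub_cpow (κ p q γ : ℝ) {z : ℂ} (hz : 1 - z ∈ slitPlane) :
    Pd κ p q (fun w => (1 - w) ^ (γ : ℂ)) z
      = -z * (1 - z) ^ ((γ : ℂ) - 2)
          * (powerCoeffA κ p q γ * (1 - z) - powerCoeffC κ p γ) := by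
  have hz0 : (1 : ℂ) - z ≠ 0 := slitPlane_ne_zero hz
  have hpow1 : (1 - z) ^ ((γ : ℂ) - 1) = (1 - z) ^ ((γ : ℂ) - 2) * (1 - z) := by
    rw [show (γ : ℂ) - 1 = (γ : ℂ) - 2 + 1 by ring, cpow_add _ _ hz0, cpow_one]
  have hpow0 : (1 - z) ^ (γ : ℂ) = (1 - z) ^ ((γ : ℂ) - 2) * (1 - z) ^ 2 := by
    rw [← cpow_natCast (1 - z) 2, ← cpow_add _ _ hz0]; push_cast; ring_nf
  unfold Pd powerCoeffA powerCoeffC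
  rw [deriv_one_sub_cpow _ hz, deriv_deriv_one_sub_cpow _ hz, hpow1]
  beta_reduce
  rw [hpow0]
  push_cast
  field_simp
  ring

lemma Pd_one_sub_cpow_eq_zero_iff (κ p q γ : ℝ) {z : ℂ} (hz : 1 - z ∈ slitPlane)
    (hz0 : z ≠ 0) :
    Pd κ p q (fun w => (1 - w) ^ (γ : ℂ)) z = 0
      ↔ (powerCoeffA κ p q γ : ℂ) * (1 - z) = powerCoeffC κ p γ := by
  have hpow : (1 - z) ^ ((γ : ℂ) - 2) ≠ 0 := by
    simp [cpow_eq_zero_iff, slitPlane_ne_zero hz]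
  rw [Pd_one_sub_cpow κ p q γ hz, mul_eq_zero, mul_eq_zero, sub_eq_zero]
  simp [hz0, hpow]

lemma Pd_one_sub_cpow_eq_zero_iff_of_real (κ p q γ : ℝ) {x : ℝ} (hx : |x| < 1)
    (hx0 : x ≠ 0) :
    Pd κ p q (fun w => (1 - w) ^ (γ : ℂ)) x = 0
      ↔ powerCoeffA κ p q γ * (1 - x) = powerCoeffC κ p γ := by
  rw [Pd_one_sub_cpow_eq_zero_iff κ p q γ
    (one_sub_mem_slitPlane_of_norm_lt_one (by simpa using hx)) (by exact_mod_cast hx0)]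
  exact_mod_cast Iff.rfl

lemma Pd_one_sub_cpow_eq_zero_on_ball_iff (κ p q γ : ℝ) :
    (∀ z ∈ Metric.ball (0 : ℂ) 1, Pd κ p q (fun w => (1 - w) ^ (γ : ℂ)) z = 0)
      ↔ powerCoeffA κ p q γ = 0 ∧ powerCoeffC κ p γ = 0 := by
  constructor
  · intro h
    have h₁ := (Pd_one_sub_cpow_eq_zero_iff_of_real κ p q γ (x := 1 / 2) (by norm_num)
      (by norm_num)).mp (h _ (by norm_num))
    have h₂ := (Pd_one_sub_cpow_eq_zero_iff_of_real κ p q γ (x := -1 / 2) (by norm_num)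
      (by norm_num)).mp (h _ (by norm_num))
    constructor <;> linarith
  · rintro ⟨hA, hC⟩ z hz
    have hz' : 1 - z ∈ slitPlane := one_sub_mem_slitPlane_of_norm_lt_one (by simpa using hz)
    simp [Pd_one_sub_cpow κ p q γ hz', hA, hC]

theorem Pd_power_solution_iff_on_parabola_general (κ p q γ : ℝ) :
    ((∀ z ∈ Metric.ball (0:ℂ) 1, Pd κ p q (fun w => (1 - w) ^ (γ : ℂ)) z = 0)
      ↔ (p - q + γ - (κ / 2) * γ ^ 2 = 0 ∧ -p + (2 + κ / 2) * γ - (κ / 2) * γ ^ 2 = 0))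
    ∧ ((p - q + γ - (κ / 2) * γ ^ 2 = 0 ∧ -p + (2 + κ / 2) * γ - (κ / 2) * γ ^ 2 = 0)
      ↔ (p = (2 + κ / 2) * γ - (κ / 2) * γ ^ 2 ∧ 2 * p - q = (1 + κ / 2) * γ)) := by
  refine ⟨Pd_one_sub_cpow_eq_zero_on_ball_iff κ p q γ, ?_⟩
  constructor <;> rintro ⟨h₁, h₂⟩ <;> constructor <;> linarith

/-- `𝒫(∂)[(1−·)^γ] = 0` on the unit disk iff `A(p,q,γ) = 0` and `C(p,γ) = 0`, which
holds iff `p = (2+κ/2)γ − (κ/2)γ²` and `2p − q = (1+κ/2)γ`, i.e. `(p,q)` lies on the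
parabola `ℛ` with parameter `γ`. -/
theorem Pd_power_solution_iff_on_parabola (κ p q γ : ℝ) (hκ : 0 < κ) :
    ((∀ z ∈ Metric.ball (0:ℂ) 1, Pd κ p q (fun w => (1 - w) ^ (γ : ℂ)) z = 0)
      ↔ (p - q + γ - (κ / 2) * γ ^ 2 = 0 ∧ -p + (2 + κ / 2) * γ - (κ / 2) * γ ^ 2 = 0))
    ∧ ((p - q + γ - (κ / 2) * γ ^ 2 = 0 ∧ -p + (2 + κ / 2) * γ - (κ / 2) * γ ^ 2 = 0)
      ↔ (p = (2 + κ / 2) * γ - (κ / 2) * γ ^ 2 ∧ 2 * p - q = (1 + κ / 2) * γ)) :=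
  Pd_power_solution_iff_on_parabola_general κ p q γ
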